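/- arXiv:1811.08016 — 2 statements merged into one kernel-verified Lean document; each statement's English description precedes it below -/
import Mathlib

section
/- Assume (H1)–(H5). Let C > 0, 0 < η < η₀, 0 < ε ≤ 1, and let v ∈ V satisfy I^ε(v) ≤ C. Then there exists a constant c > 0, depending only on C and on the data of W, such that ∫_{Σ^η} |v′(x)| dx ≤ c (ε² η^{−q} + ε²), where Σ^η = {x ∈ (0,1) : |v′(x) − z_k| > η for all k = 1,2,3}. -/
open MeasureTheory Set Filter

/-- `u ∈ V = H²(0,1) ∩ W^{1,p}₀(0,1)`, represented through its first and second
derivatives `u'`, `u''`: `u(0) = u(1) = 0`, `u` and `u'` are absolutely continuous on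
`[0,1]`, `u' ∈ L^p(0,1)` and `u'' ∈ L²(0,1)`. -/
def MemV (p : ℝ) (u u' u'' : ℝ → ℝ) : Prop :=
  u 0 = 0 ∧ u 1 = 0 ∧
  (∀ x ∈ Set.Icc (0:ℝ) 1, u x = ∫ t in (0:ℝ)..x, u' t) ∧
  (∀ x ∈ Set.Icc (0:ℝ) 1, u' x = u' 0 + ∫ t in (0:ℝ)..x, u'' t) ∧
  IntervalIntegrable u' volume 0 1 ∧
  IntervalIntegrable u'' volume 0 1 ∧
  IntervalIntegrable (fun x => |u' x| ^ p) volume 0 1 ∧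
  IntervalIntegrable (fun x => (u'' x) ^ 2) volume 0 1

/-- The rescaled energy `I^ε(u) = ∫₀¹ (ε⁴ u''² + ε⁻² W(u') + ε⁻² u²) dx`. -/
noncomputable def Ieps (W : ℝ → ℝ) (ε : ℝ) (u u' u'' : ℝ → ℝ) : ℝ :=
  ∫ x in (0:ℝ)..1,
    (ε ^ 4 * (u'' x) ^ 2 + (ε ^ 2)⁻¹ * W (u' x) + (ε ^ 2)⁻¹ * (u x) ^ 2)

/-- Hypotheses (H1)–(H5) on the three–well potential `W`. -/
structure HypW (W : ℝ → ℝ) (p q c₀ c₁ c₂ c₃ η₀ z₁ z₂ z₃ : ℝ) : Prop where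
  cont : Continuous W
  nonneg : ∀ s, 0 ≤ W s
  hp : 1 < p
  hc₁ : 0 < c₁
  hc₂ : 0 < c₂
  hc₃ : 0 < c₃
  lb : ∀ s, c₁ * |s| ^ p - c₂ ≤ W s
  ub : ∀ s, W s ≤ c₃ * (|s| ^ p + 1)
  hz₁ : z₁ < 0
  hz₂ : 0 < z₂
  hz₂₃ : z₂ < z₃
  zeroSet : ∀ s, W s = 0 ↔ (s = z₁ ∨ s = z₂ ∨ s = z₃)
  hη₀pos : 0 < η₀
  hη₀lt : η₀ < min 1 (min (-z₁) (min z₂ ((z₃ - z₂) / 2)))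
  hc₀ : 0 < c₀
  hq : 0 < q
  coer : ∀ s,
    c₀ * min (min (|s - z₁| ^ q) (min (|s - z₂| ^ q) (|s - z₃| ^ q))) (η₀ ^ q) ≤ W s

/-- The volume fraction `λ^η(v)` at the well `z`:
the Lebesgue measure of `{x ∈ (0,1) : |v'(x) − z| ≤ η}`. -/
noncomputable def lamEta (v' : ℝ → ℝ) (z η : ℝ) : ℝ :=
  (volume {x : ℝ | x ∈ Set.Ioo (0:ℝ) 1 ∧ |v' x - z| ≤ η}).toReal

/-- `E₀`-type constant: `2∫_{a}^{b} √(W(s)) ds`. -/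
noncomputable def cE (W : ℝ → ℝ) (a b : ℝ) : ℝ := 2 * ∫ s in a..b, Real.sqrt (W s)

/-- The constant `A₀ = (3/2)^{2/3} E₀^{2/3} (z₂² z₂₁)^{1/3}`. -/
noncomputable def cA₀ (W : ℝ → ℝ) (z₁ z₂ : ℝ) : ℝ :=
  (3/2 : ℝ) ^ ((2:ℝ)/3) * (cE W z₁ z₂) ^ ((2:ℝ)/3) * (z₂ ^ 2 * (1 - z₂ / z₁)) ^ ((1:ℝ)/3)

/-- The constant `B₀ = (3/2)^{2/3} (E₀+E₁)^{2/3} (z₃² z₃₁)^{1/3}`. -/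
noncomputable def cB₀ (W : ℝ → ℝ) (z₁ z₂ z₃ : ℝ) : ℝ :=
  (3/2 : ℝ) ^ ((2:ℝ)/3) * (cE W z₁ z₂ + cE W z₂ z₃) ^ ((2:ℝ)/3) *
    (z₃ ^ 2 * (1 - z₃ / z₁)) ^ ((1:ℝ)/3)

/-!
The energy bound gives `∫₀¹ W(v') ≤ C ε²`. On `Σ^η` the coercivity of `W` near its wells gives
`W(v') ≥ c₀ η^q`, hence `|Σ^η| ≤ C ε² / (c₀ η^q)`. The growth bound `c₁|s|^p - c₂ ≤ W(s)`
with `p ≥ 1` gives `|s| ≤ 1 + (c₂ + W(s))/c₁`, and integrating this over `Σ^η` yields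
`∫_{Σ^η} |v'| ≤ (1 + c₂/c₁) |Σ^η| + c₁⁻¹ ∫ W(v') ≲ ε² η^{-q} + ε²`.
-/

lemma continuousOn_Icc_of_eq_const_add_integral {f g : ℝ → ℝ} {c : ℝ}
    (hg : IntervalIntegrable g volume 0 1)
    (hf : ∀ x ∈ Icc (0:ℝ) 1, f x = c + ∫ t in (0:ℝ)..x, g t) :
    ContinuousOn f (Icc 0 1) := by
  have hprim := intervalIntegral.continuousOn_primitive_interval' hg (a := 0) (by simp)
  rw [uIcc_of_le zero_le_one] at hprim
  exact (continuousOn_const.add hprim).congr hf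

namespace MemV

variable {p : ℝ} {v v' v'' W : ℝ → ℝ}

lemma continuousOn_deriv (hv : MemV p v v' v'') : ContinuousOn v' (Icc 0 1) := by
  obtain ⟨-, -, -, hv', -, hv'', -⟩ := hv
  exact continuousOn_Icc_of_eq_const_add_integral hv'' hv'

lemma continuousOn (hv : MemV p v v' v'') : ContinuousOn v (Icc 0 1) := by
  obtain ⟨-, -, hv, -, hv', -⟩ := hv
  exact continuousOn_Icc_of_eq_const_add_integral (c := 0) hv' fun x hx => by
    rw [zero_add, hv x hx]

lemma integrableOn_comp_deriv (hW : Continuous W) (hv : MemV p v v' v'') :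
    IntegrableOn (fun x => W (v' x)) (Icc 0 1) :=
  (hW.comp_continuousOn hv.continuousOn_deriv).integrableOn_Icc

lemma integral_comp_deriv_le_of_Ieps_le {ε C : ℝ} (hW : Continuous W)
    (hv : MemV p v v' v'') (hε : 0 < ε) (hI : Ieps W ε v v' v'' ≤ C) :
    ∫ x in (0:ℝ)..1, W (v' x) ≤ C * ε ^ 2 := by
  have h₂ : IntervalIntegrable (fun x => (ε ^ 2)⁻¹ * W (v' x)) volume 0 1 :=
    ((hW.comp_continuousOn hv.continuousOn_deriv).intervalIntegrable_of_Icc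
      zero_le_one).const_mul _
  have h₃ : IntervalIntegrable (fun x => (ε ^ 2)⁻¹ * v x ^ 2) volume 0 1 :=
    ((hv.continuousOn.pow 2).intervalIntegrable_of_Icc zero_le_one).const_mul _
  obtain ⟨-, -, -, -, -, -, -, hsq⟩ := hv
  have h₁ : IntervalIntegrable (fun x => ε ^ 4 * v'' x ^ 2) volume 0 1 := hsq.const_mul _
  have hsplit : Ieps W ε v v' v'' = (∫ x in (0:ℝ)..1, ε ^ 4 * v'' x ^ 2) +
      (ε ^ 2)⁻¹ * (∫ x in (0:ℝ)..1, W (v' x)) + ∫ x in (0:ℝ)..1, (ε ^ 2)⁻¹ * v x ^ 2 := by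
    rw [Ieps, intervalIntegral.integral_add (h₁.add h₂) h₃,
      intervalIntegral.integral_add h₁ h₂, intervalIntegral.integral_const_mul (ε ^ 2)⁻¹]
  have hnn₁ : 0 ≤ ∫ x in (0:ℝ)..1, ε ^ 4 * v'' x ^ 2 :=
    intervalIntegral.integral_nonneg zero_le_one fun x _ => by positivity
  have hnn₃ : 0 ≤ ∫ x in (0:ℝ)..1, (ε ^ 2)⁻¹ * v x ^ 2 :=
    intervalIntegral.integral_nonneg zero_le_one fun x _ => by positivity
  have hpot : (ε ^ 2)⁻¹ * ∫ x in (0:ℝ)..1, W (v' x) ≤ C := by linarith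
  rwa [inv_mul_le_iff₀ (by positivity), mul_comm] at hpot

lemma setIntegral_comp_deriv_le_of_Ieps_le {ε C : ℝ} {S : Set ℝ} (hWc : Continuous W)
    (hW : ∀ s, 0 ≤ W s) (hv : MemV p v v' v'') (hε : 0 < ε)
    (hI : Ieps W ε v v' v'' ≤ C) (hS : S ⊆ Icc 0 1) :
    ∫ x in S, W (v' x) ≤ C * ε ^ 2 :=
  calc ∫ x in S, W (v' x) ≤ ∫ x in Icc 0 1, W (v' x) :=
        setIntegral_mono_set (hv.integrableOn_comp_deriv hWc)
          (ae_of_all _ fun _ => hW _) hS.eventuallyLE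
    _ = ∫ x in (0:ℝ)..1, W (v' x) := by
        rw [integral_Icc_eq_integral_Ioc, intervalIntegral.integral_of_le zero_le_one]
    _ ≤ C * ε ^ 2 := hv.integral_comp_deriv_le_of_Ieps_le hWc hε hI

end MemV

lemma HypW.mul_rpow_le_of_le_abs_sub {W : ℝ → ℝ} {p q c₀ c₁ c₂ c₃ η₀ z₁ z₂ z₃ η s : ℝ}
    (hW : HypW W p q c₀ c₁ c₂ c₃ η₀ z₁ z₂ z₃) (hη : 0 ≤ η) (hηη₀ : η ≤ η₀)
    (h₁ : η ≤ |s - z₁|) (h₂ : η ≤ |s - z₂|) (h₃ : η ≤ |s - z₃|) :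
    c₀ * η ^ q ≤ W s := by
  have hmono : ∀ {t}, η ≤ t → η ^ q ≤ t ^ q := fun h => Real.rpow_le_rpow hη h hW.hq.le
  exact le_trans (mul_le_mul_of_nonneg_left (le_min (le_min (hmono h₁)
    (le_min (hmono h₂) (hmono h₃))) (hmono hηη₀)) hW.hc₀.le) (hW.coer s)

lemma abs_le_of_mul_abs_rpow_sub_le {c₁ c₂ p s w : ℝ} (hc₁ : 0 < c₁) (hp : 1 ≤ p)
    (h : c₁ * |s| ^ p - c₂ ≤ w) :
    |s| ≤ 1 + c₂ / c₁ + c₁⁻¹ * w := by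
  have hs : |s| ≤ 1 + |s| ^ p := by
    rcases le_or_gt |s| 1 with hs1 | hs1
    · linarith [Real.rpow_nonneg (abs_nonneg s) p]
    · have := Real.rpow_le_rpow_of_exponent_le hs1.le hp
      rw [Real.rpow_one] at this
      linarith
  have hsp : |s| ^ p ≤ c₂ / c₁ + c₁⁻¹ * w := by
    rw [div_eq_inv_mul, ← mul_add, le_inv_mul_iff₀ hc₁]
    linarith
  linarith

lemma setIntegral_abs_le_of_abs_le_add_mul {S : Set ℝ} {f g : ℝ → ℝ} {a b : ℝ}
    (hS : MeasurableSet S) (hSfin : volume S ≠ ⊤) (hf : IntegrableOn f S)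
    (hg : IntegrableOn g S) (hfg : ∀ x ∈ S, |f x| ≤ a + b * g x) :
    ∫ x in S, |f x| ≤ a * volume.real S + b * ∫ x in S, g x := by
  have ha : IntegrableOn (fun _ => a) S := integrableOn_const hSfin
  calc ∫ x in S, |f x| ≤ ∫ x in S, (a + b * g x) :=
        setIntegral_mono_on hf.abs (ha.add (hg.const_mul b)) hS hfg
    _ = a * volume.real S + b * ∫ x in S, g x := by
        rw [integral_add ha (hg.const_mul b), setIntegral_const, integral_const_mul,
          smul_eq_mul, mul_comm]

/-- The set `Σ^η` of the paper. -/
def badSet (v' : ℝ → ℝ) (η z₁ z₂ z₃ : ℝ) : Set ℝ :=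
  {x | x ∈ Ioo 0 1 ∧ η < |v' x - z₁| ∧ η < |v' x - z₂| ∧ η < |v' x - z₃|}

section badSet

variable {v' : ℝ → ℝ} {η z₁ z₂ z₃ : ℝ}

lemma badSet_subset_Icc : badSet v' η z₁ z₂ z₃ ⊆ Icc 0 1 :=
  fun _ hx => Ioo_subset_Icc_self hx.1

lemma volume_badSet_ne_top : volume (badSet v' η z₁ z₂ z₃) ≠ ⊤ :=
  ((measure_mono badSet_subset_Icc).trans_lt measure_Icc_lt_top).ne

lemma isOpen_badSet (hv' : ContinuousOn v' (Icc 0 1)) : IsOpen (badSet v' η z₁ z₂ z₃) := by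
  have hfar : ∀ z, IsOpen {y : ℝ | η < |y - z|} := fun z =>
    isOpen_lt continuous_const (by fun_prop)
  exact (hv'.mono Ioo_subset_Icc_self).isOpen_inter_preimage isOpen_Ioo
    ((hfar z₁).and ((hfar z₂).and (hfar z₃)))

lemma HypW.measureReal_badSet_le {W : ℝ → ℝ} {p q c₀ c₁ c₂ c₃ η₀ ε C : ℝ} {v v'' : ℝ → ℝ}
    (hW : HypW W p q c₀ c₁ c₂ c₃ η₀ z₁ z₂ z₃) (hη : 0 < η) (hηη₀ : η ≤ η₀) (hε : 0 < ε)
    (hv : MemV p v v' v'') (hI : Ieps W ε v v' v'' ≤ C) :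
    volume.real (badSet v' η z₁ z₂ z₃) ≤ C / c₀ * (ε ^ 2 * η ^ (-q)) := by
  have := hW.hc₀
  have hηq : 0 < η ^ q := Real.rpow_pos_of_pos hη q
  have hWlow : c₀ * η ^ q * volume.real (badSet v' η z₁ z₂ z₃) ≤ C * ε ^ 2 :=
    (setIntegral_ge_of_const_le_real (isOpen_badSet hv.continuousOn_deriv).measurableSet
      volume_badSet_ne_top
      (fun x hx => hW.mul_rpow_le_of_le_abs_sub hη.le hηη₀ hx.2.1.le hx.2.2.1.le hx.2.2.2.le)
      ((hv.integrableOn_comp_deriv hW.cont).mono_set badSet_subset_Icc)).trans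
      (hv.setIntegral_comp_deriv_le_of_Ieps_le hW.cont hW.nonneg hε hI badSet_subset_Icc)
  calc volume.real (badSet v' η z₁ z₂ z₃)
      = c₀ * η ^ q * volume.real (badSet v' η z₁ z₂ z₃) / (c₀ * η ^ q) := by field_simp
    _ ≤ C * ε ^ 2 / (c₀ * η ^ q) := by gcongr
    _ = C / c₀ * (ε ^ 2 * η ^ (-q)) := by rw [Real.rpow_neg hη.le]; field_simp

end badSet

/-- The `L¹`-norm of `v'` on the bad set `Σ^η` is at most `c(ε² η^{−q} + ε²)`, with `c`
depending only on `C` and the data of `W`. -/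
theorem statement6
    (W : ℝ → ℝ) (p q c₀ c₁ c₂ c₃ η₀ z₁ z₂ z₃ : ℝ)
    (hW : HypW W p q c₀ c₁ c₂ c₃ η₀ z₁ z₂ z₃)
    (C : ℝ) (hC : 0 < C) :
    ∃ c : ℝ, 0 < c ∧
      ∀ η ε : ℝ, ∀ v v' v'' : ℝ → ℝ,
        0 < η → η < η₀ → 0 < ε → ε ≤ 1 →
        MemV p v v' v'' → Ieps W ε v v' v'' ≤ C →
        (∫ x in {x : ℝ | x ∈ Set.Ioo (0:ℝ) 1 ∧
            η < |v' x - z₁| ∧ η < |v' x - z₂| ∧ η < |v' x - z₃|}, |v' x|)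
          ≤ c * (ε ^ 2 * η ^ (-q) + ε ^ 2) := by
  have := hW.hc₀; have := hW.hc₁; have := hW.hc₂
  refine ⟨(1 + c₂ / c₁) * C / c₀ + C / c₁, by positivity, ?_⟩
  intro η ε v v' v'' hη hηη₀ hε _ hv hI
  change ∫ x in badSet v' η z₁ z₂ z₃, |v' x| ≤ _
  calc ∫ x in badSet v' η z₁ z₂ z₃, |v' x|
      ≤ (1 + c₂ / c₁) * volume.real (badSet v' η z₁ z₂ z₃) +
          c₁⁻¹ * ∫ x in badSet v' η z₁ z₂ z₃, W (v' x) :=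
        setIntegral_abs_le_of_abs_le_add_mul (isOpen_badSet hv.continuousOn_deriv).measurableSet
          volume_badSet_ne_top (hv.continuousOn_deriv.integrableOn_Icc.mono_set badSet_subset_Icc)
          ((hv.integrableOn_comp_deriv hW.cont).mono_set badSet_subset_Icc)
          fun x _ => abs_le_of_mul_abs_rpow_sub_le hW.hc₁ hW.hp.le (hW.lb (v' x))
    _ ≤ (1 + c₂ / c₁) * (C / c₀ * (ε ^ 2 * η ^ (-q))) + c₁⁻¹ * (C * ε ^ 2) := by
        gcongr
        · exact hW.measureReal_badSet_le hη hηη₀.le hε hv hI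
        · exact hv.setIntegral_comp_deriv_le_of_Ieps_le hW.cont hW.nonneg hε hI
            badSet_subset_Icc
    _ ≤ ((1 + c₂ / c₁) * C / c₀ + C / c₁) * (ε ^ 2 * η ^ (-q) + ε ^ 2) := by
        refine le_of_sub_nonneg ?_
        convert (by positivity :
          0 ≤ (1 + c₂ / c₁) * C / c₀ * ε ^ 2 + C / c₁ * (ε ^ 2 * η ^ (-q))) using 1
        ring
end

section
/- Assume (H1)–(H5). Let C > 0, 0 < η < η₀, and 0 < ε ≤ η^q, and let v ∈ V satisfy I^ε(v) ≤ C. Then there exist constants R_* > 0 (depending only on the data of W) and R^* > 0 (depending only on C and the data of W) with the following property. Let (y⁻,y⁺) ⊂ (0,1) be an L-interval for v with associated D-interval (x⁻,x⁺), and set α = Leb({x ∈ (x⁻,x⁺) : |v′(x) − z₂| ≤ η}) and β = Leb({x ∈ (x⁻,x⁺) : |v′(x) − z₃| ≤ η}). If max{α,β} ≥ R^* ε or max{α,β} ≤ R_* ε, then ∫_{y⁻}^{y⁺} (ε⁴ v″² + ε^{−2}W(v′) + ε^{−2}v²) dx ≥ A₀ α + B₀ β. -/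
open MeasureTheory Set Filter

/-- An `A₊^η`-transition layer on `(a,b)` for `v'`. -/
def IsAPlusLayer (v' : ℝ → ℝ) (η z₁ z₂ a b : ℝ) : Prop :=
  a < b ∧ (∀ x ∈ Set.Ioo a b, z₁ + η < v' x ∧ v' x < z₂ - η) ∧
  v' a = z₁ + η ∧ v' b = z₂ - η

/-- An `A₋^η`-transition layer on `(a,b)` for `v'`. -/
def IsAMinusLayer (v' : ℝ → ℝ) (η z₁ z₂ a b : ℝ) : Prop :=
  a < b ∧ (∀ x ∈ Set.Ioo a b, z₁ + η < v' x ∧ v' x < z₂ - η) ∧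
  v' a = z₂ - η ∧ v' b = z₁ + η

/-- `(ym, yp) ⊂ (0,1)` is an `L`-interval for `v'` with associated `D`-interval
`(xm, xp)`. -/
def IsLInterval (v' : ℝ → ℝ) (η z₁ z₂ ym yp xm xp : ℝ) : Prop :=
  0 ≤ ym ∧ yp ≤ 1 ∧
  v' ym = z₁ + η ∧ v' yp = z₁ + η ∧
  (∀ x ∈ Set.Ioo ym yp, z₁ + η < v' x) ∧
  IsAPlusLayer v' η z₁ z₂ ym xm ∧
  IsAMinusLayer v' η z₁ z₂ xp yp ∧
  xm ≤ xp

/-!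
On an `L`-interval the energy is bounded below in two ways, and the constants `R_*`, `R^*` are
chosen so that one of them dominates `A₀α + B₀β ≤ (|A₀| + |B₀|) max α β`.

*Small fractions.* Inside the layer `(y⁻, x⁻)`, `v'` crosses from `z₁ + η₀` to `z₂ - η₀` on an
interval `[s, t]` where it stays at distance `η₀` from the wells, so `W(v') ≥ c₀ η₀^q` there.
Cauchy–Schwarz and AM–GM then give the `η`-independent bound `2ε (z₂ - z₁ - 2η₀) √(c₀ η₀^q)`.

*Large fractions.* On the wells `T = {|v' - z₂| ≤ η} ∪ {|v' - z₃| ≤ η}` we have `v' ≥ z₂ - η₀`,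
while `v' < 0` only on a set of measure `O(ε)` (there `W(v') ≥ c₀ε`). Integrating `v'` between
the extreme points of `T ∩ {|v| ≤ r}` shows that this set has measure `≲ 2r / (z₂ - η₀)`, so `|v|`
exceeds `r ~ μ = max α β` on half of `T`, and the term `ε⁻² v²` alone contributes `≳ μ³ / ε²`.
-/

theorem integral_eq_sub_of_forall_eq_add_integral {f g : ℝ → ℝ} {a b c : ℝ}
    (hg : IntervalIntegrable g volume a b) (hf : ∀ x ∈ Icc a b, f x = c + ∫ t in a..x, g t)
    {u w : ℝ} (hu : u ∈ Icc a b) (hw : w ∈ Icc a b) :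
    ∫ x in u..w, g x = f w - f u := by
  have hg' : ∀ x ∈ Icc a b, IntervalIntegrable g volume a x := fun x hx =>
    hg.mono_set (uIcc_subset_uIcc left_mem_uIcc (mem_uIcc_of_le hx.1 hx.2))
  rw [hf w hw, hf u hu, ← intervalIntegral.integral_interval_sub_left (hg' w hw) (hg' u hu)]
  ring

theorem continuousOn_of_forall_eq_add_integral {f g : ℝ → ℝ} {a b c : ℝ} (hab : a ≤ b)
    (hg : IntervalIntegrable g volume a b) (hf : ∀ x ∈ Icc a b, f x = c + ∫ t in a..x, g t) :
    ContinuousOn f (Icc a b) := by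
  have hg' : IntegrableOn g (uIcc a b) := by
    rw [uIcc_of_le hab]; exact (intervalIntegrable_iff_integrableOn_Icc_of_le hab).1 hg
  have h := intervalIntegral.continuousOn_primitive_interval hg'
  rw [uIcc_of_le hab] at h
  exact (continuousOn_const.add h).congr hf

theorem sq_integral_div_le_integral_sq {g : ℝ → ℝ} {s t : ℝ} (hst : s < t)
    (hg : IntervalIntegrable g volume s t)
    (hg2 : IntervalIntegrable (fun x => g x ^ 2) volume s t) :
    (∫ x in s..t, g x) ^ 2 / (t - s) ≤ ∫ x in s..t, g x ^ 2 := by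
  set c := (∫ x in s..t, g x) / (t - s)
  have hvar : 0 ≤ ∫ x in s..t, (g x - c) ^ 2 :=
    intervalIntegral.integral_nonneg hst.le fun x _ => sq_nonneg _
  have hexpand : ∫ x in s..t, (g x - c) ^ 2
      = (∫ x in s..t, g x ^ 2) - 2 * c * (∫ x in s..t, g x) + (t - s) * c ^ 2 := by
    have hg' : IntervalIntegrable (fun x => 2 * g x * c) volume s t :=
      (hg.const_mul 2).mul_const c
    simp_rw [sub_sq]
    rw [intervalIntegral.integral_add (hg2.sub hg') intervalIntegrable_const,
      intervalIntegral.integral_sub hg2 hg', intervalIntegral.integral_mul_const,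
      intervalIntegral.integral_const_mul, intervalIntegral.integral_const, smul_eq_mul]
    ring
  have hts : t - s ≠ 0 := (sub_pos.2 hst).ne'
  have hmean : (∫ x in s..t, g x) ^ 2 / (t - s)
      = 2 * c * (∫ x in s..t, g x) - (t - s) * c ^ 2 := by
    simp only [c]; field_simp; ring
  linarith

theorem two_mul_sqrt_mul_le_div_add_mul {A B L : ℝ} (hA : 0 ≤ A) (hB : 0 ≤ B) (hL : 0 < L) :
    2 * √(A * B) ≤ A / L + B * L := by
  have h := two_mul_le_add_sq √(A / L) √(B * L)
  rwa [Real.sq_sqrt (div_nonneg hA hL.le), Real.sq_sqrt (mul_nonneg hB hL.le), mul_assoc,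
    ← Real.sqrt_mul (div_nonneg hA hL.le), div_mul_eq_mul_div, mul_div_assoc,
    mul_div_cancel_right₀ _ hL.ne'] at h

theorem mul_add_mul_le_abs_add_abs_mul_max {A B α β : ℝ} (hα : 0 ≤ α) (hβ : 0 ≤ β) :
    A * α + B * β ≤ (|A| + |B|) * max α β := by
  have hA := (mul_le_mul_of_nonneg_right (le_abs_self A) hα).trans
    (mul_le_mul_of_nonneg_left (le_max_left α β) (abs_nonneg A))
  have hB := (mul_le_mul_of_nonneg_right (le_abs_self B) hβ).trans
    (mul_le_mul_of_nonneg_left (le_max_right α β) (abs_nonneg B))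
  linarith

theorem exists_Icc_crossing {f : ℝ → ℝ} {a b c d : ℝ} (hab : a ≤ b)
    (hf : ContinuousOn f (Icc a b)) (hfa : f a ≤ c) (hcd : c < d) (hfb : d ≤ f b) :
    ∃ s t, a ≤ s ∧ s < t ∧ t ≤ b ∧ f s = c ∧ f t = d ∧ ∀ x ∈ Icc s t, c ≤ f x ∧ f x ≤ d := by
  -- `t` is the first time `f` reaches `d`, and `s` the last time before `t` that it is at `c`.
  set Hd := Icc a b ∩ f ⁻¹' {d}
  have hHd : IsClosed Hd := hf.preimage_isClosed_of_isClosed isClosed_Icc isClosed_singleton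
  obtain ⟨x₀, hx₀, hfx₀⟩ := intermediate_value_Icc hab hf ⟨hfa.trans hcd.le, hfb⟩
  have htHd : sInf Hd ∈ Hd := hHd.csInf_mem ⟨x₀, hx₀, hfx₀⟩ (bddBelow_Icc.mono inter_subset_left)
  set t := sInf Hd
  obtain ⟨⟨hat, htb⟩, hft⟩ := htHd
  have hle_d : ∀ x ∈ Icc a t, f x ≤ d := by
    intro x hx
    by_contra! hdx
    obtain ⟨y, hy, hfy⟩ := intermediate_value_Icc hx.1 (hf.mono (Icc_subset_Icc_right
      (hx.2.trans htb))) ⟨hfa.trans hcd.le, hdx.le⟩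
    have hty : t ≤ y := csInf_le (bddBelow_Icc.mono inter_subset_left)
      ⟨⟨hy.1, hy.2.trans (hx.2.trans htb)⟩, hfy⟩
    have : x = t := le_antisymm hx.2 (hty.trans hy.2)
    exact (this ▸ hdx).ne' hft
  set Hc := Icc a t ∩ f ⁻¹' {c}
  have hHc : IsClosed Hc := (hf.mono (Icc_subset_Icc_right htb)).preimage_isClosed_of_isClosed
    isClosed_Icc isClosed_singleton
  obtain ⟨x₁, hx₁, hfx₁⟩ := intermediate_value_Icc hat (hf.mono (Icc_subset_Icc_right htb))
    ⟨hfa, hft ▸ hcd.le⟩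
  have hsHc : sSup Hc ∈ Hc := hHc.csSup_mem ⟨x₁, hx₁, hfx₁⟩ (bddAbove_Icc.mono inter_subset_left)
  set s := sSup Hc
  obtain ⟨⟨has, hst⟩, hfs⟩ := hsHc
  have hc_le : ∀ x ∈ Icc s t, c ≤ f x := by
    intro x hx
    by_contra! hxc
    obtain ⟨y, hy, hfy⟩ := intermediate_value_Icc hx.2
      (hf.mono (Icc_subset_Icc (has.trans hx.1) htb)) ⟨hxc.le, hft ▸ hcd.le⟩
    have hys : y ≤ s := le_csSup (bddAbove_Icc.mono inter_subset_left)
      ⟨⟨has.trans (hx.1.trans hy.1), hy.2⟩, hfy⟩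
    have : x = s := le_antisymm (hy.1.trans hys) hx.1
    exact (this ▸ hxc).ne hfs
  have hst' : s < t := hst.lt_of_ne fun h => hcd.ne (hfs ▸ h ▸ hft)
  exact ⟨s, t, has, hst', htb, hfs, hft, fun x hx =>
    ⟨hc_le x hx, hle_d x ⟨has.trans hx.1, hx.2⟩⟩⟩
theorem mul_measureReal_le_integral {f : ℝ → ℝ} {a b c : ℝ} {K : Set ℝ} (hab : a ≤ b)
    (hf : IntervalIntegrable f volume a b) (hK : MeasurableSet K) (hKsub : K ⊆ Ioc a b)
    (hf0 : ∀ x ∈ Ioc a b, 0 ≤ f x) (hfK : ∀ x ∈ K, c ≤ f x) :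
    c * volume.real K ≤ ∫ x in a..b, f x := by
  have hKfin : volume K ≠ ⊤ := ((measure_mono hKsub).trans_lt measure_Ioc_lt_top).ne
  rw [intervalIntegral.integral_of_le hab, mul_comm, ← smul_eq_mul]
  calc volume.real K • c ≤ ∫ x in K, f x :=
        setIntegral_ge_of_const_le hK hKfin hfK (hf.1.mono_set hKsub)
    _ ≤ ∫ x in Ioc a b, f x :=
        setIntegral_mono_set hf.1 (ae_restrict_of_forall_mem measurableSet_Ioc hf0)
          hKsub.eventuallyLE

theorem mul_measureReal_add_mul_measureReal_le_integral {f : ℝ → ℝ} {a m u w : ℝ} {K S : Set ℝ}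
    (huw : u ≤ w) (hf : IntegrableOn f (Icc u w)) (hK : MeasurableSet K) (hKsub : K ⊆ Icc u w)
    (hS : MeasurableSet S) (hSfin : volume S ≠ ⊤) (hm : m ≤ 0) (hfK : ∀ x ∈ K, a ≤ f x)
    (hfm : ∀ x ∈ Icc u w, m ≤ f x) (hfS : ∀ x ∈ Icc u w, x ∉ S → 0 ≤ f x) :
    a * volume.real K + m * volume.real S ≤ ∫ x in u..w, f x := by
  set g : ℝ → ℝ := fun x => K.indicator (fun _ => a) x + S.indicator (fun _ => m) x
  have hgf : ∀ x ∈ Icc u w, g x ≤ f x := by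
    intro x hx
    by_cases hxK : x ∈ K <;> by_cases hxS : x ∈ S <;>
      simp only [g, indicator_of_mem, indicator_of_notMem, hxK, hxS, not_false_eq_true]
    · linarith [hfK x hxK]
    · linarith [hfK x hxK]
    · linarith [hfm x hx]
    · linarith [hfS x hx hxS]
  have hIcc_fin : volume (Icc u w) ≠ ⊤ := measure_Icc_lt_top.ne
  have hKa : IntegrableOn (K.indicator fun _ => a) (Icc u w) :=
    (integrableOn_const hIcc_fin).indicator hK
  have hSm : IntegrableOn (S.indicator fun _ => m) (Icc u w) :=
    (integrableOn_const hIcc_fin).indicator hS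
  have hSreal : volume.real (Icc u w ∩ S) ≤ volume.real S :=
    measureReal_mono inter_subset_right hSfin
  calc a * volume.real K + m * volume.real S
      ≤ a * volume.real K + m * volume.real (Icc u w ∩ S) :=
        add_le_add le_rfl (mul_le_mul_of_nonpos_left hSreal hm)
    _ = ∫ x in Icc u w, g x := by
        rw [integral_add hKa.integrable hSm.integrable, setIntegral_indicator hK,
          setIntegral_indicator hS, setIntegral_const, setIntegral_const, inter_eq_right.2 hKsub,
          smul_eq_mul, smul_eq_mul, mul_comm a, mul_comm m]
    _ ≤ ∫ x in Icc u w, f x := setIntegral_mono_on (hKa.add hSm) hf measurableSet_Icc hgf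
    _ = ∫ x in u..w, f x := by
        rw [intervalIntegral.integral_of_le huw, integral_Icc_eq_integral_Ioc]

theorem mul_measureReal_add_mul_measureReal_le_of_abs_le {f f' : ℝ → ℝ} {a m r x₁ x₂ : ℝ}
    {K S : Set ℝ} (hf : ContinuousOn f (Icc x₁ x₂)) (hf' : IntegrableOn f' (Icc x₁ x₂))
    (hFTC : ∀ u ∈ Icc x₁ x₂, ∀ w ∈ Icc x₁ x₂, ∫ x in u..w, f' x = f w - f u)
    (hK : MeasurableSet K) (hKsub : K ⊆ Icc x₁ x₂) (hS : MeasurableSet S) (hSfin : volume S ≠ ⊤)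
    (hr : 0 ≤ r) (hm : m ≤ 0) (hfK : ∀ x ∈ K, |f x| ≤ r) (hf'K : ∀ x ∈ K, a ≤ f' x)
    (hf'm : ∀ x ∈ Icc x₁ x₂, m ≤ f' x) (hf'S : ∀ x ∈ Icc x₁ x₂, x ∉ S → 0 ≤ f' x) :
    a * volume.real K + m * volume.real S ≤ 2 * r := by
  rcases K.eq_empty_or_nonempty with rfl | hKne
  · rw [measureReal_empty, mul_zero, zero_add]
    nlinarith [measureReal_nonneg (μ := volume) (s := S)]
  have hKbar : closure K ⊆ Icc x₁ x₂ ∩ {x | |f x| ≤ r} :=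
    closure_minimal (fun x hx => ⟨hKsub hx, hfK x hx⟩)
      (hf.abs.preimage_isClosed_of_isClosed isClosed_Icc isClosed_Iic)
  have hcpt : IsCompact (closure K) :=
    isCompact_Icc.of_isClosed_subset isClosed_closure (hKbar.trans inter_subset_left)
  obtain ⟨u, hu, hu_le⟩ := hcpt.exists_isLeast hKne.closure
  obtain ⟨w, hw, hw_ge⟩ := hcpt.exists_isGreatest hKne.closure
  obtain ⟨⟨hu₁, -⟩, hfu : |f u| ≤ r⟩ := hKbar hu
  obtain ⟨⟨-, hw₂⟩, hfw : |f w| ≤ r⟩ := hKbar hw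
  have hIcc : Icc u w ⊆ Icc x₁ x₂ := Icc_subset_Icc hu₁ hw₂
  have hKuw : K ⊆ Icc u w := fun x hx =>
    ⟨hu_le (subset_closure hx), hw_ge (subset_closure hx)⟩
  calc a * volume.real K + m * volume.real S ≤ ∫ x in u..w, f' x :=
        mul_measureReal_add_mul_measureReal_le_integral (hu_le hw) (hf'.mono_set hIcc) hK hKuw
          hS hSfin hm hf'K (fun x hx => hf'm x (hIcc hx)) (fun x hx => hf'S x (hIcc hx))
    _ = f w - f u := hFTC u (hKbar hu).1 w (hKbar hw).1
    _ ≤ 2 * r := by linarith [abs_le.1 hfu, abs_le.1 hfw]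

theorem measurableSet_setOf_mem_Ioo_and_le {g : ℝ → ℝ} {a b c : ℝ}
    (hg : ContinuousOn g (Ioo a b)) : MeasurableSet {x | x ∈ Ioo a b ∧ g x ≤ c} := by
  have h : {x | x ∈ Ioo a b ∧ g x ≤ c} = Ioo a b \ (Ioo a b ∩ g ⁻¹' Ioi c) := by
    ext x; simp [not_lt]
  rw [h]
  exact measurableSet_Ioo.diff (hg.isOpen_inter_preimage isOpen_Ioo isOpen_Ioi).measurableSet

theorem HypW.η₀_bounds {W : ℝ → ℝ} {p q c₀ c₁ c₂ c₃ η₀ z₁ z₂ z₃ : ℝ}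
    (hW : HypW W p q c₀ c₁ c₂ c₃ η₀ z₁ z₂ z₃) : η₀ < -z₁ ∧ η₀ < z₂ ∧ 2 * η₀ < z₃ - z₂ := by
  have h := hW.hη₀lt
  simp only [lt_min_iff] at h
  exact ⟨h.2.1, h.2.2.1, by linarith [h.2.2.2]⟩

theorem HypW.mul_rpow_le {W : ℝ → ℝ} {p q c₀ c₁ c₂ c₃ η₀ z₁ z₂ z₃ : ℝ}
    (hW : HypW W p q c₀ c₁ c₂ c₃ η₀ z₁ z₂ z₃) {r s : ℝ} (hr : 0 ≤ r) (hrη₀ : r ≤ η₀)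
    (hs : s ∈ Icc (z₁ + r) (z₂ - r)) : c₀ * r ^ q ≤ W s := by
  have hpow : ∀ d, r ≤ d → r ^ q ≤ d ^ q := fun d hd => Real.rpow_le_rpow hr hd hW.hq.le
  refine le_trans (mul_le_mul_of_nonneg_left ?_ hW.hc₀.le) (hW.coer s)
  refine le_min (le_min (hpow _ ?_) (le_min (hpow _ ?_) (hpow _ ?_))) (hpow _ hrη₀)
  · exact le_abs.2 (Or.inl (by linarith [hs.1]))
  · exact le_abs.2 (Or.inr (by linarith [hs.2]))
  · exact le_abs.2 (Or.inr (by linarith [hs.2, hW.hz₂₃]))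

noncomputable def energyDensity (W : ℝ → ℝ) (ε : ℝ) (u u' u'' : ℝ → ℝ) (x : ℝ) : ℝ :=
  ε ^ 4 * (u'' x) ^ 2 + (ε ^ 2)⁻¹ * W (u' x) + (ε ^ 2)⁻¹ * (u x) ^ 2

section energyDensity

variable {W : ℝ → ℝ} {ε : ℝ} {u u' u'' : ℝ → ℝ} {x : ℝ}

theorem inv_sq_mul_sq_le_energyDensity (hW : ∀ s, 0 ≤ W s) :
    (ε ^ 2)⁻¹ * u x ^ 2 ≤ energyDensity W ε u u' u'' x := by
  have := mul_nonneg (inv_nonneg.2 (sq_nonneg ε)) (hW (u' x))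
  unfold energyDensity; linarith [(by positivity : 0 ≤ ε ^ 4 * u'' x ^ 2)]

theorem energyDensity_nonneg (hW : ∀ s, 0 ≤ W s) : 0 ≤ energyDensity W ε u u' u'' x :=
  (by positivity : 0 ≤ (ε ^ 2)⁻¹ * u x ^ 2).trans (inv_sq_mul_sq_le_energyDensity hW)

theorem inv_sq_mul_W_le_energyDensity :
    (ε ^ 2)⁻¹ * W (u' x) ≤ energyDensity W ε u u' u'' x := by
  unfold energyDensity
  linarith [(by positivity : 0 ≤ ε ^ 4 * u'' x ^ 2), (by positivity : 0 ≤ (ε ^ 2)⁻¹ * u x ^ 2)]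

end energyDensity

def wellSet (v' : ℝ → ℝ) (z η a b : ℝ) : Set ℝ := {x | x ∈ Ioo a b ∧ |v' x - z| ≤ η}

theorem measurableSet_wellSet {v' : ℝ → ℝ} {z η a b : ℝ} (hv' : ContinuousOn v' (Ioo a b)) :
    MeasurableSet (wellSet v' z η a b) :=
  measurableSet_setOf_mem_Ioo_and_le (hv'.sub continuousOn_const).abs

theorem measureReal_wellSet_union {v' : ℝ → ℝ} {z z' η a b : ℝ}
    (hv' : ContinuousOn v' (Ioo a b)) (hzz' : 2 * η < z' - z) :
    volume.real (wellSet v' z η a b ∪ wellSet v' z' η a b)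
      = volume.real (wellSet v' z η a b) + volume.real (wellSet v' z' η a b) := by
  have hfin : ∀ z'', volume (wellSet v' z'' η a b) ≠ ⊤ := fun _ =>
    ((measure_mono fun _ hx => hx.1).trans_lt measure_Ioo_lt_top).ne
  refine measureReal_union (Set.disjoint_left.2 fun x hx hx' => ?_) (measurableSet_wellSet hv')
    (hfin z) (hfin z')
  linarith [abs_le.1 hx.2, abs_le.1 hx'.2]

section MemV

variable {W : ℝ → ℝ} {p q c₀ c₁ c₂ c₃ η₀ z₁ z₂ z₃ : ℝ} {v v' v'' : ℝ → ℝ} {η ε C : ℝ}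

theorem MemV.continuousOn_deriv_s8 (hV : MemV p v v' v'') : ContinuousOn v' (Icc 0 1) := by
  obtain ⟨-, -, -, hv', -, hv''int, -, -⟩ := hV
  exact continuousOn_of_forall_eq_add_integral zero_le_one hv''int hv'

theorem MemV.continuousOn_s8 (hV : MemV p v v' v'') : ContinuousOn v (Icc 0 1) := by
  obtain ⟨-, -, hv, -, hv'int, -, -, -⟩ := hV
  exact continuousOn_of_forall_eq_add_integral zero_le_one hv'int
    fun x hx => (hv x hx).trans (zero_add _).symm

theorem MemV.integral_deriv_eq_sub (hV : MemV p v v' v'') {s t : ℝ} (hs : s ∈ Icc 0 1)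
    (ht : t ∈ Icc 0 1) : ∫ x in s..t, v' x = v t - v s := by
  obtain ⟨-, -, hv, -, hv'int, -, -, -⟩ := hV
  exact integral_eq_sub_of_forall_eq_add_integral hv'int
    (fun x hx => (hv x hx).trans (zero_add _).symm) hs ht

theorem MemV.integral_deriv2_eq_sub (hV : MemV p v v' v'') {s t : ℝ} (hs : s ∈ Icc 0 1)
    (ht : t ∈ Icc 0 1) : ∫ x in s..t, v'' x = v' t - v' s := by
  obtain ⟨-, -, -, hv', -, hv''int, -, -⟩ := hV
  exact integral_eq_sub_of_forall_eq_add_integral hv''int hv' hs ht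

theorem MemV.intervalIntegrable_deriv2 (hV : MemV p v v' v'') {s t : ℝ} (hs : s ∈ Icc 0 1)
    (ht : t ∈ Icc 0 1) : IntervalIntegrable v'' volume s t := by
  obtain ⟨-, -, -, -, -, hv''int, -, -⟩ := hV
  exact hv''int.mono_set (by rw [uIcc_of_le zero_le_one]; exact uIcc_subset_Icc hs ht)

theorem MemV.intervalIntegrable_deriv2_sq (hV : MemV p v v' v'') {s t : ℝ} (hs : s ∈ Icc 0 1)
    (ht : t ∈ Icc 0 1) : IntervalIntegrable (fun x => v'' x ^ 2) volume s t := by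
  obtain ⟨-, -, -, -, -, -, -, hv''sq⟩ := hV
  exact hv''sq.mono_set (by rw [uIcc_of_le zero_le_one]; exact uIcc_subset_Icc hs ht)

theorem MemV.intervalIntegrable_energyDensity (hV : MemV p v v' v'') (hW : Continuous W)
    {s t : ℝ} (hs : s ∈ Icc 0 1) (ht : t ∈ Icc 0 1) :
    IntervalIntegrable (energyDensity W ε v v' v'') volume s t := by
  have hst : uIcc s t ⊆ Icc 0 1 := uIcc_subset_Icc hs ht
  have hW' := (hW.comp_continuousOn hV.continuousOn_deriv_s8).mono hst
  have hv := (hV.continuousOn_s8.pow 2).mono hst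
  exact (((hV.intervalIntegrable_deriv2_sq hs ht).const_mul _).add
    (hW'.intervalIntegrable.const_mul _)).add (hv.intervalIntegrable.const_mul _)

theorem MemV.integral_energyDensity_mono (hV : MemV p v v' v'') (hW : Continuous W)
    (hW₀ : ∀ s, 0 ≤ W s) {a b s t : ℝ} (ha : 0 ≤ a) (has : a ≤ s) (hst : s ≤ t) (htb : t ≤ b)
    (hb : b ≤ 1) :
    ∫ x in s..t, energyDensity W ε v v' v'' x ≤ ∫ x in a..b, energyDensity W ε v v' v'' x :=
  intervalIntegral.integral_mono_interval has hst htb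
    (ae_of_all _ fun _ => energyDensity_nonneg hW₀)
    (hV.intervalIntegrable_energyDensity hW ⟨ha, by linarith⟩ ⟨by linarith, hb⟩)

theorem MemV.inv_sq_mul_sq_mul_measureReal_le_integral_energyDensity (hV : MemV p v v' v'')
    (hW : Continuous W) (hW₀ : ∀ s, 0 ≤ W s) {a b r : ℝ} {K : Set ℝ} (ha : 0 ≤ a) (hab : a ≤ b)
    (hb : b ≤ 1) (hK : MeasurableSet K) (hKsub : K ⊆ Ioc a b) (hr : 0 ≤ r)
    (hvK : ∀ x ∈ K, r ≤ |v x|) :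
    (ε ^ 2)⁻¹ * r ^ 2 * volume.real K ≤ ∫ x in a..b, energyDensity W ε v v' v'' x := by
  refine mul_measureReal_le_integral hab
    (hV.intervalIntegrable_energyDensity hW ⟨ha, by linarith⟩ ⟨by linarith, hb⟩) hK hKsub
    (fun x _ => energyDensity_nonneg hW₀) fun x hx => ?_
  have hsq : r ^ 2 ≤ v x ^ 2 := sq_abs (v x) ▸ pow_le_pow_left₀ hr (hvK x hx) 2
  exact (mul_le_mul_of_nonneg_left hsq (by positivity)).trans
    (inv_sq_mul_sq_le_energyDensity hW₀)

theorem MemV.le_integral_energyDensity_of_crossing (hW : HypW W p q c₀ c₁ c₂ c₃ η₀ z₁ z₂ z₃)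
    (hV : MemV p v v' v'') (hε : 0 < ε) {a b : ℝ} (ha : 0 ≤ a)
    (hab : a ≤ b) (hb : b ≤ 1) (hva : v' a ≤ z₁ + η₀) (hvb : z₂ - η₀ ≤ v' b) :
    2 * ε * (z₂ - z₁ - 2 * η₀) * √(c₀ * η₀ ^ q)
      ≤ ∫ x in a..b, energyDensity W ε v v' v'' x := by
  obtain ⟨hη₀z₁, hη₀z₂, -⟩ := hW.η₀_bounds
  obtain ⟨s, t, has, hst, htb, hvs, hvt, hcross⟩ := exists_Icc_crossing hab
    (hV.continuousOn_deriv_s8.mono (Icc_subset_Icc ha hb)) hva (by linarith) hvb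
  have hs : s ∈ Icc (0 : ℝ) 1 := ⟨ha.trans has, by linarith⟩
  have ht : t ∈ Icc (0 : ℝ) 1 := ⟨by linarith, htb.trans hb⟩
  set Δ := z₂ - z₁ - 2 * η₀
  set w₀ := c₀ * η₀ ^ q
  have hΔ : 0 ≤ Δ := by linarith
  have hw₀ : 0 ≤ w₀ := mul_nonneg hW.hc₀.le (Real.rpow_nonneg hW.hη₀pos.le q)
  have hts : 0 < t - s := sub_pos.2 hst
  have hCS : Δ ^ 2 / (t - s) ≤ ∫ x in s..t, v'' x ^ 2 := by
    have h := sq_integral_div_le_integral_sq hst (hV.intervalIntegrable_deriv2 hs ht)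
      (hV.intervalIntegrable_deriv2_sq hs ht)
    rwa [hV.integral_deriv2_eq_sub hs ht, hvs, hvt, show z₂ - η₀ - (z₁ + η₀) = Δ by ring] at h
  have hpt : ∀ x ∈ Icc s t, ε ^ 4 * v'' x ^ 2 + (ε ^ 2)⁻¹ * w₀ ≤ energyDensity W ε v v' v'' x := by
    intro x hx
    have hWx : w₀ ≤ W (v' x) := hW.mul_rpow_le hW.hη₀pos.le le_rfl (hcross x hx)
    have := mul_le_mul_of_nonneg_left hWx (inv_nonneg.2 (sq_nonneg ε))
    unfold energyDensity
    linarith [(by positivity : 0 ≤ (ε ^ 2)⁻¹ * v x ^ 2)]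
  have hlocal : ε ^ 4 * (∫ x in s..t, v'' x ^ 2) + (ε ^ 2)⁻¹ * w₀ * (t - s)
      ≤ ∫ x in s..t, energyDensity W ε v v' v'' x := by
    have hint := (hV.intervalIntegrable_deriv2_sq hs ht).const_mul (ε ^ 4)
    have h := intervalIntegral.integral_mono_on hst.le (hint.add intervalIntegrable_const)
      (hV.intervalIntegrable_energyDensity hW.cont hs ht) hpt
    rwa [intervalIntegral.integral_add hint intervalIntegrable_const,
      intervalIntegral.integral_const_mul, intervalIntegral.integral_const, smul_eq_mul,
      mul_comm (t - s)] at h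
  have hsqrt : √((ε ^ 4 * Δ ^ 2) * ((ε ^ 2)⁻¹ * w₀)) = ε * Δ * √w₀ := by
    rw [show (ε ^ 4 * Δ ^ 2) * ((ε ^ 2)⁻¹ * w₀) = (ε * Δ) ^ 2 * w₀ by field_simp,
      Real.sqrt_mul (sq_nonneg _), Real.sqrt_sq (mul_nonneg hε.le hΔ)]
  calc 2 * ε * Δ * √w₀ = 2 * √((ε ^ 4 * Δ ^ 2) * ((ε ^ 2)⁻¹ * w₀)) := by rw [hsqrt]; ring
    _ ≤ ε ^ 4 * Δ ^ 2 / (t - s) + (ε ^ 2)⁻¹ * w₀ * (t - s) :=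
        two_mul_sqrt_mul_le_div_add_mul (by positivity) (by positivity) hts
    _ ≤ ε ^ 4 * (∫ x in s..t, v'' x ^ 2) + (ε ^ 2)⁻¹ * w₀ * (t - s) := by
        rw [mul_div_assoc]; gcongr
    _ ≤ ∫ x in s..t, energyDensity W ε v v' v'' x := hlocal
    _ ≤ ∫ x in a..b, energyDensity W ε v v' v'' x :=
        hV.integral_energyDensity_mono hW.cont hW.nonneg ha has hst.le htb hb

theorem MemV.mul_measureReal_setOf_deriv_nonpos_le (hW : HypW W p q c₀ c₁ c₂ c₃ η₀ z₁ z₂ z₃)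
    (hV : MemV p v v' v'') (hη : 0 < η) (hηη₀ : η < η₀) (hε : 0 < ε) (hεη : ε ≤ η ^ q)
    (hIC : Ieps W ε v v' v'' ≤ C) {y₁ y₂ : ℝ} (hy₁ : 0 ≤ y₁) (hy₂ : y₂ ≤ 1)
    (hv' : ∀ x ∈ Ioo y₁ y₂, z₁ + η < v' x) :
    c₀ * volume.real {x | x ∈ Ioo y₁ y₂ ∧ v' x ≤ 0} ≤ C * ε := by
  obtain ⟨-, hη₀z₂, -⟩ := hW.η₀_bounds
  set S := {x | x ∈ Ioo y₁ y₂ ∧ v' x ≤ 0}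
  have hsub : Ioo y₁ y₂ ⊆ Icc 0 1 := fun x hx => ⟨hy₁.trans hx.1.le, hx.2.le.trans hy₂⟩
  have hS : MeasurableSet S := measurableSet_setOf_mem_Ioo_and_le (hV.continuousOn_deriv_s8.mono hsub)
  have hSsub : S ⊆ Ioc 0 1 := fun x hx => ⟨hy₁.trans_lt hx.1.1, hx.1.2.le.trans hy₂⟩
  have hWS : ∀ x ∈ S, (ε ^ 2)⁻¹ * (c₀ * ε) ≤ energyDensity W ε v v' v'' x := by
    intro x hx
    have h1 : c₀ * η ^ q ≤ W (v' x) :=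
      hW.mul_rpow_le hη.le hηη₀.le ⟨(hv' x hx.1).le, by linarith [hx.2]⟩
    have h2 : c₀ * ε ≤ c₀ * η ^ q := mul_le_mul_of_nonneg_left hεη hW.hc₀.le
    exact (mul_le_mul_of_nonneg_left (h2.trans h1) (by positivity)).trans
      inv_sq_mul_W_le_energyDensity
  have h := (mul_measureReal_le_integral zero_le_one
    (hV.intervalIntegrable_energyDensity hW.cont ⟨le_rfl, zero_le_one⟩ ⟨zero_le_one, le_rfl⟩)
    hS hSsub (fun x _ => energyDensity_nonneg hW.nonneg) hWS).trans hIC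
  rwa [show (ε ^ 2)⁻¹ * (c₀ * ε) * volume.real S = c₀ * volume.real S / ε by field_simp,
    div_le_iff₀ hε] at h

theorem MemV.mul_measureReal_inter_setOf_abs_le_le (hW : HypW W p q c₀ c₁ c₂ c₃ η₀ z₁ z₂ z₃)
    (hV : MemV p v v' v'') (hη : 0 < η) (hηη₀ : η < η₀) (hε : 0 < ε) (hεη : ε ≤ η ^ q)
    (hIC : Ieps W ε v v' v'' ≤ C) {ym yp xm xp : ℝ} (hL : IsLInterval v' η z₁ z₂ ym yp xm xp)
    {T : Set ℝ} (hT : MeasurableSet T) (hTsub : T ⊆ Ioo xm xp) {a r : ℝ} (hr : 0 ≤ r)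
    (hv'T : ∀ x ∈ T, a ≤ v' x) :
    c₀ * (a * volume.real (T ∩ {x | x ∈ Icc 0 1 ∧ |v x| ≤ r}))
      ≤ c₀ * (2 * r) - z₁ * (C * ε) := by
  obtain ⟨hym, hyp, -, -, hv'L, ⟨hymxm, -⟩, ⟨hxpyp, -⟩, -⟩ := hL
  have hD : Icc xm xp ⊆ Ioo ym yp := Icc_subset_Ioo hymxm hxpyp
  have hD01 : Icc xm xp ⊆ Icc 0 1 := Icc_subset_Icc (hym.trans hymxm.le) (hxpyp.le.trans hyp)
  set S := {x | x ∈ Ioo ym yp ∧ v' x ≤ 0}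
  have hS := hV.mul_measureReal_setOf_deriv_nonpos_le hW hη hηη₀ hε hεη hIC hym hyp hv'L
  have hSmeas : MeasurableSet S := measurableSet_setOf_mem_Ioo_and_le
    (hV.continuousOn_deriv_s8.mono fun x hx => ⟨hym.trans hx.1.le, hx.2.le.trans hyp⟩)
  have hSfin : volume S ≠ ⊤ := ((measure_mono fun _ hx => hx.1).trans_lt measure_Ioo_lt_top).ne
  have hB : MeasurableSet {x | x ∈ Icc 0 1 ∧ |v x| ≤ r} :=
    (hV.continuousOn_s8.abs.preimage_isClosed_of_isClosed isClosed_Icc isClosed_Iic).measurableSet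
  have hosc := mul_measureReal_add_mul_measureReal_le_of_abs_le (hV.continuousOn_s8.mono hD01)
    (hV.continuousOn_deriv_s8.mono hD01).integrableOn_Icc
    (fun s hs t ht => hV.integral_deriv_eq_sub (hD01 hs) (hD01 ht)) (hT.inter hB)
    ((inter_subset_left.trans hTsub).trans Ioo_subset_Icc_self) hSmeas hSfin hr hW.hz₁.le
    (fun x hx => hx.2.2) (fun x hx => hv'T x hx.1) (fun x hx => by linarith [hv'L x (hD hx)])
    (fun x hx hxS => by by_contra! h; exact hxS ⟨hD hx, h.le⟩)
  calc c₀ * (a * volume.real (T ∩ {x | x ∈ Icc 0 1 ∧ |v x| ≤ r}))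
      ≤ c₀ * (2 * r - z₁ * volume.real S) :=
        mul_le_mul_of_nonneg_left (by linarith) hW.hc₀.le
    _ = c₀ * (2 * r) + (-z₁) * (c₀ * volume.real S) := by ring
    _ ≤ c₀ * (2 * r) + (-z₁) * (C * ε) := by gcongr; linarith [hW.hz₁]
    _ = c₀ * (2 * r) - z₁ * (C * ε) := by ring

theorem MemV.le_integral_energyDensity_of_wells (hW : HypW W p q c₀ c₁ c₂ c₃ η₀ z₁ z₂ z₃)
    (hV : MemV p v v' v'') (hη : 0 < η) (hηη₀ : η < η₀) (hε : 0 < ε) (hεη : ε ≤ η ^ q)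
    (hIC : Ieps W ε v v' v'' ≤ C) {ym yp xm xp : ℝ} (hL : IsLInterval v' η z₁ z₂ ym yp xm xp)
    {μ : ℝ} (hμ0 : 0 ≤ μ)
    (hμαβ : μ ≤ volume.real (wellSet v' z₂ η xm xp) + volume.real (wellSet v' z₃ η xm xp))
    (hμ : -z₁ * (C * ε) ≤ c₀ * ((z₂ - η₀) * μ / 4)) :
    (ε ^ 2)⁻¹ * ((z₂ - η₀) * μ / 8) ^ 2 * (μ / 2)
      ≤ ∫ x in ym..yp, energyDensity W ε v v' v'' x := by
  obtain ⟨hym, hyp, -, -, -, ⟨hymxm, -⟩, ⟨hxpyp, -⟩, hxmxp⟩ := id hL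
  obtain ⟨-, hη₀z₂, hη₀z₃⟩ := hW.η₀_bounds
  set a := z₂ - η₀
  have ha : 0 < a := by linarith
  have hD01 : Ioo xm xp ⊆ Icc 0 1 := fun x hx =>
    ⟨hym.trans (hymxm.trans hx.1).le, (hx.2.trans hxpyp).le.trans hyp⟩
  have hv'c : ContinuousOn v' (Ioo xm xp) := hV.continuousOn_deriv_s8.mono hD01
  set T := wellSet v' z₂ η xm xp ∪ wellSet v' z₃ η xm xp
  have hTsub : T ⊆ Ioo xm xp := union_subset (fun _ hx => hx.1) (fun _ hx => hx.1)
  have hTmeas : MeasurableSet T :=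
    (measurableSet_wellSet hv'c).union (measurableSet_wellSet hv'c)
  have hv'T : ∀ x ∈ T, a ≤ v' x := by
    rintro x (⟨-, hx⟩ | ⟨-, hx⟩) <;> linarith [(abs_le.1 hx).1]
  set B := {x | x ∈ Icc 0 1 ∧ |v x| ≤ a * μ / 8}
  have hB : MeasurableSet B :=
    (hV.continuousOn_s8.abs.preimage_isClosed_of_isClosed isClosed_Icc isClosed_Iic).measurableSet
  have hTB : volume.real (T ∩ B) ≤ μ / 2 := by
    have h := hV.mul_measureReal_inter_setOf_abs_le_le hW hη hηη₀ hε hεη hIC hL hTmeas hTsub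
      (r := a * μ / 8) (by positivity) hv'T
    have h' : c₀ * (a * volume.real (T ∩ B)) ≤ c₀ * (a * (μ / 2)) := by linarith
    exact le_of_mul_le_mul_left (le_of_mul_le_mul_left h' hW.hc₀) ha
  have hTnB : μ / 2 ≤ volume.real (T \ B) := by
    have hT := measureReal_wellSet_union (z := z₂) (z' := z₃) (η := η) hv'c (by linarith)
    have hsplit := measureReal_inter_add_sdiff (μ := volume) (s := T) hB
      ((measure_mono hTsub).trans_lt measure_Ioo_lt_top).ne
    linarith
  calc (ε ^ 2)⁻¹ * (a * μ / 8) ^ 2 * (μ / 2)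
      ≤ (ε ^ 2)⁻¹ * (a * μ / 8) ^ 2 * volume.real (T \ B) := by gcongr
    _ ≤ ∫ x in ym..yp, energyDensity W ε v v' v'' x :=
        hV.inv_sq_mul_sq_mul_measureReal_le_integral_energyDensity hW.cont hW.nonneg hym
          (by linarith) hyp (hTmeas.diff hB)
          (sdiff_subset.trans (hTsub.trans fun x hx =>
            ⟨hymxm.trans hx.1, (hx.2.trans hxpyp).le⟩)) (by positivity)
          fun x hx => (lt_of_not_ge fun h => hx.2 ⟨hD01 (hTsub hx.1), h⟩).le

theorem MemV.le_integral_energyDensity_of_large (hW : HypW W p q c₀ c₁ c₂ c₃ η₀ z₁ z₂ z₃)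
    (hV : MemV p v v' v'') (hη : 0 < η) (hηη₀ : η < η₀) (hε : 0 < ε) (hεη : ε ≤ η ^ q)
    (hIC : Ieps W ε v v' v'' ≤ C) {ym yp xm xp : ℝ} (hL : IsLInterval v' η z₁ z₂ ym yp xm xp)
    {κ : ℝ} (hκ : 0 ≤ κ)
    (hμ : max (4 * -z₁ * C / (c₀ * (z₂ - η₀))) (16 * (κ + 1) / (z₂ - η₀)) * ε
      ≤ max (volume.real (wellSet v' z₂ η xm xp)) (volume.real (wellSet v' z₃ η xm xp))) :
    κ * max (volume.real (wellSet v' z₂ η xm xp)) (volume.real (wellSet v' z₃ η xm xp))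
      ≤ ∫ x in ym..yp, energyDensity W ε v v' v'' x := by
  obtain ⟨-, hη₀z₂, -⟩ := hW.η₀_bounds
  set α := volume.real (wellSet v' z₂ η xm xp)
  set β := volume.real (wellSet v' z₃ η xm xp)
  set μ := max α β
  set a := z₂ - η₀
  have ha : 0 < a := by linarith
  have hμ₁ : -z₁ * (C * ε) ≤ c₀ * (a * μ / 4) := by
    have h := (mul_le_mul_of_nonneg_right (le_max_left _ _) hε.le).trans hμ
    rw [div_mul_eq_mul_div, div_le_iff₀ (mul_pos hW.hc₀ ha)] at h; linarith
  have hμ₂ : 16 * (κ + 1) * ε ≤ a * μ := by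
    have h := (mul_le_mul_of_nonneg_right (le_max_right _ _) hε.le).trans hμ
    rwa [div_mul_eq_mul_div, div_le_iff₀ ha, mul_comm μ] at h
  have hμ0 : 0 < μ := by nlinarith
  have hμαβ : μ ≤ α + β :=
    max_le (le_add_of_nonneg_right measureReal_nonneg) (le_add_of_nonneg_left measureReal_nonneg)
  have hsq : 128 * κ * ε ^ 2 ≤ (a * μ) ^ 2 := by
    nlinarith [pow_le_pow_left₀ (by positivity) hμ₂ 2, sq_nonneg (κ * ε), sq_nonneg ε]
  calc κ * μ ≤ (a * μ) ^ 2 * μ / (128 * ε ^ 2) := by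
        rw [le_div_iff₀ (by positivity)]; nlinarith [mul_le_mul_of_nonneg_right hsq hμ0.le]
    _ = (ε ^ 2)⁻¹ * (a * μ / 8) ^ 2 * (μ / 2) := by field_simp; ring
    _ ≤ ∫ x in ym..yp, energyDensity W ε v v' v'' x :=
        hV.le_integral_energyDensity_of_wells hW hη hηη₀ hε hεη hIC hL hμ0.le hμαβ hμ₁

end MemV

/-- Lemma 4.3: on `L`-intervals whose volume fractions `α, β` are either very large or
very small compared with `ε`, the local energy dominates `A₀α + B₀β`. -/
theorem statement8
    (W : ℝ → ℝ) (p q c₀ c₁ c₂ c₃ η₀ z₁ z₂ z₃ : ℝ)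
    (hW : HypW W p q c₀ c₁ c₂ c₃ η₀ z₁ z₂ z₃) :
    ∃ Rlow : ℝ, 0 < Rlow ∧
      ∀ C : ℝ, 0 < C →
        ∃ Rhigh : ℝ, 0 < Rhigh ∧
          ∀ η ε : ℝ, ∀ v v' v'' : ℝ → ℝ,
            0 < η → η < η₀ → 0 < ε → ε ≤ η ^ q →
            MemV p v v' v'' → Ieps W ε v v' v'' ≤ C →
            ∀ ym yp xm xp : ℝ, IsLInterval v' η z₁ z₂ ym yp xm xp →
              max ((volume {x : ℝ | x ∈ Set.Ioo xm xp ∧ |v' x - z₂| ≤ η}).toReal)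
                  ((volume {x : ℝ | x ∈ Set.Ioo xm xp ∧ |v' x - z₃| ≤ η}).toReal)
                  ≥ Rhigh * ε ∨
              max ((volume {x : ℝ | x ∈ Set.Ioo xm xp ∧ |v' x - z₂| ≤ η}).toReal)
                  ((volume {x : ℝ | x ∈ Set.Ioo xm xp ∧ |v' x - z₃| ≤ η}).toReal)
                  ≤ Rlow * ε →
              cA₀ W z₁ z₂ *
                  (volume {x : ℝ | x ∈ Set.Ioo xm xp ∧ |v' x - z₂| ≤ η}).toReal
                + cB₀ W z₁ z₂ z₃ *
                  (volume {x : ℝ | x ∈ Set.Ioo xm xp ∧ |v' x - z₃| ≤ η}).toReal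
                ≤ ∫ x in ym..yp,
                    (ε ^ 4 * (v'' x) ^ 2 + (ε ^ 2)⁻¹ * W (v' x) + (ε ^ 2)⁻¹ * (v x) ^ 2) := by
  obtain ⟨hη₀z₁, hη₀z₂, -⟩ := hW.η₀_bounds
  set κ := |cA₀ W z₁ z₂| + |cB₀ W z₁ z₂ z₃|
  set E := 2 * (z₂ - z₁ - 2 * η₀) * √(c₀ * η₀ ^ q)
  have hE : 0 < E := mul_pos (mul_pos two_pos (by linarith))
    (Real.sqrt_pos.2 (mul_pos hW.hc₀ (Real.rpow_pos_of_pos hW.hη₀pos q)))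
  refine ⟨E / (κ + 1), div_pos hE (by positivity), fun C _ => ?_⟩
  refine ⟨max (4 * -z₁ * C / (c₀ * (z₂ - η₀))) (16 * (κ + 1) / (z₂ - η₀)),
    lt_max_of_lt_right (div_pos (by positivity) (by linarith)), ?_⟩
  intro η ε v v' v'' hη hηη₀ hε hεη hV hIC ym yp xm xp hL hαβ
  obtain ⟨hym, hyp, -, -, -, ⟨hymxm, -, hv'ym, hv'xm⟩, ⟨hxpyp, -⟩, hxmxp⟩ := id hL
  refine (mul_add_mul_le_abs_add_abs_mul_max measureReal_nonneg measureReal_nonneg).trans ?_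
  rcases hαβ with hlarge | hsmall
  · exact hV.le_integral_energyDensity_of_large hW hη hηη₀ hε hεη hIC hL (by positivity) hlarge
  calc κ * max (volume.real (wellSet v' z₂ η xm xp)) (volume.real (wellSet v' z₃ η xm xp))
      ≤ κ * (E / (κ + 1) * ε) := mul_le_mul_of_nonneg_left hsmall (by positivity)
    _ ≤ 2 * ε * (z₂ - z₁ - 2 * η₀) * √(c₀ * η₀ ^ q) := by
        rw [div_mul_eq_mul_div, mul_div_assoc', div_le_iff₀ (by positivity)]
        nlinarith [mul_pos hE hε]
    _ ≤ ∫ x in ym..xm, energyDensity W ε v v' v'' x :=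
        hV.le_integral_energyDensity_of_crossing hW hε hym hymxm.le (by linarith)
          (by linarith) (by linarith)
    _ ≤ ∫ x in ym..yp, energyDensity W ε v v' v'' x :=
        hV.integral_energyDensity_mono hW.cont hW.nonneg hym le_rfl hymxm.le (by linarith) hyp
end
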